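/- Write a nonzero Laurent polynomial f ∈ ℤ[q, q^{−1}] as f = m·g·h where m ∈ ℤ_{>0}, g ∈ ℤ[q] is a primitive polynomial with g(0) > 0 having no cyclotomic irreducible factor, and h is a unit of à = ℤ[q, q^{−1}, (q^n−1)^{−1} : n>0]. If for every field K and every non-root-of-unity z ∈ K^× the specialization of f at q = z is nonzero, then m = 1 and g = 1. -/

import Mathlib

noncomputable section

/-- Evaluation of a Laurent polynomial over `ℤ` at a unit `z` of a field `K`. -/
def lEval {K : Type*} [Field K] (z : Kˣ) (f : LaurentPolynomial ℤ) : K :=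
  f.coeff.sum fun n a => (a : K) * ((z ^ n : Kˣ) : K)

/-- The canonical image of a Laurent polynomial over `ℤ` in `ℚ(q)` (with `q = X`). -/
def lRF (f : LaurentPolynomial ℤ) : RatFunc ℚ :=
  f.coeff.sum fun n a => (a : RatFunc ℚ) * (RatFunc.X : RatFunc ℚ) ^ n

/-- The subring `Ã = ℤ[q, q⁻¹, (qⁿ−1)⁻¹ : n > 0]` of `ℚ(q)`. -/
def Atilde : Subring (RatFunc ℚ) :=
  Subring.closure
    ({RatFunc.X, (RatFunc.X)⁻¹} ∪
      {x : RatFunc ℚ | ∃ n : ℕ, 0 < n ∧ x = ((RatFunc.X : RatFunc ℚ) ^ n - 1)⁻¹})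

/-!
Clearing the denominators of `h ∈ Ã`, which are products of `q` and of the `qⁿ - 1`, gives an
identity `qᴺ f · s = m g a` in `ℤ[q]` with `s` vanishing at no `z` that is not a root of unity.
Hence `f(z) = 0` wherever `m g(z) = 0` for such a `z`. A prime `p ∣ m` gives `z = q ∈ 𝔽_p(q)`.
A complex root of a nonconstant `g` is nonzero since `g(0) ≠ 0`, and is not a root of unity,
since otherwise its minimal polynomial over `ℤ`, a cyclotomic polynomial, would divide `g`.
So `g` is a positive primitive constant, i.e. `1`.
-/

open Polynomial LaurentPolynomial

lemma LaurentPolynomial.smeval_eq_eval₂ {R S : Type*} [CommSemiring R] [CommSemiring S]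
    [Algebra R S] (f : R[T;T⁻¹]) (x : Sˣ) : f.smeval x = eval₂ (algebraMap R S) x f := by
  induction f using LaurentPolynomial.induction_on' with
  | add p q hp hq => rw [smeval_add, map_add, hp, hq]
  | C_mul_T n a => rw [smeval_C_mul_T_n, eval₂_C_mul_T, Algebra.smul_def]

lemma lEval_eq_eval₂ {K : Type*} [Field K] (z : Kˣ) (f : LaurentPolynomial ℤ) :
    lEval z f = eval₂ (algebraMap ℤ K) z f := by
  rw [← smeval_eq_eval₂, LaurentPolynomial.smeval_eq_sum, lEval]
  simp only [zsmul_eq_mul]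

lemma lRF_eq_lEval (f : LaurentPolynomial ℤ) :
    lRF f = lEval (Units.mk0 RatFunc.X RatFunc.X_ne_zero) f := by
  refine Finsupp.sum_congr fun n _ => ?_
  rw [Units.val_zpow_eq_zpow_val, Units.val_mk0]

lemma lEval_mul_pow_eq_aeval {K : Type*} [Field K] (z : Kˣ) {f : LaurentPolynomial ℤ} {N : ℕ}
    {P : ℤ[X]} (hP : toLaurent P = f * T N) : lEval z f * (z : K) ^ N = aeval (z : K) P := by
  rw [lEval_eq_eval₂, aeval_def, ← eval₂_toLaurent, hP, map_mul, eval₂_T_n]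

lemma RatFunc.mk0_X_pow_ne_one {F : Type*} [Field F] {n : ℕ} (hn : 0 < n) :
    Units.mk0 (X : RatFunc F) X_ne_zero ^ n ≠ 1 := by
  rw [ne_eq, Units.ext_iff, Units.val_pow_eq_pow_val, Units.val_mk0, Units.val_one]
  exact fun h => (transcendental_X.pow hn) (h ▸ isAlgebraic_one)

lemma RatFunc.aeval_X_injective_int :
    Function.Injective (aeval (X : RatFunc ℚ) : ℤ[X] → RatFunc ℚ) := by
  rw [← transcendental_iff_injective, ← algebraMap_X,
    transcendental_algebraMap_iff (algebraMap_injective ℚ)]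
  exact (Polynomial.transcendental_X ℚ).restrictScalars Int.cast_injective

namespace Atilde

def denominators : Submonoid ℤ[X] :=
  Submonoid.closure ({X} ∪ {p | ∃ n : ℕ, 0 < n ∧ p = X ^ n - 1})

lemma aeval_ne_zero_of_mem_denominators {K : Type*} [Field K] {z : Kˣ}
    (hz : ∀ n : ℕ, 0 < n → z ^ n ≠ 1) {s : ℤ[X]} (hs : s ∈ denominators) :
    aeval (z : K) s ≠ 0 := by
  induction hs using Submonoid.closure_induction with
  | mem p hp =>
    rcases hp with rfl | ⟨n, hn, rfl⟩
    · simp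
    · rw [map_sub, map_pow, aeval_X, map_one, sub_ne_zero, ← Units.val_pow_eq_pow_val,
        Ne, Units.val_eq_one]
      exact hz n hn
  | one => simp
  | mul p q _ _ hp hq => rw [map_mul]; exact mul_ne_zero hp hq

lemma exists_mul_eq_aeval_of_mem {x : RatFunc ℚ} (hx : x ∈ Atilde) :
    ∃ a : ℤ[X], ∃ s ∈ denominators, x * aeval RatFunc.X s = aeval RatFunc.X a := by
  induction hx using Subring.closure_induction with
  | mem y hy =>
    rcases hy with (rfl | rfl) | ⟨n, hn, rfl⟩
    · exact ⟨X, 1, one_mem _, by simp⟩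
    · refine ⟨1, X, Submonoid.subset_closure (Or.inl rfl), ?_⟩
      rw [aeval_X, inv_mul_cancel₀ RatFunc.X_ne_zero, map_one]
    · refine ⟨1, X ^ n - 1, Submonoid.subset_closure (Or.inr ⟨n, hn, rfl⟩), ?_⟩
      have hne : (RatFunc.X : RatFunc ℚ) ^ n - 1 ≠ 0 := by
        simpa [sub_eq_zero, Units.ext_iff] using RatFunc.mk0_X_pow_ne_one (F := ℚ) hn
      simp [inv_mul_cancel₀ hne]
  | zero => exact ⟨0, 1, one_mem _, by simp⟩
  | one => exact ⟨1, 1, one_mem _, by simp⟩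
  | add x y _ _ ihx ihy =>
    obtain ⟨a, s, hs, ha⟩ := ihx
    obtain ⟨b, t, ht, hb⟩ := ihy
    refine ⟨a * t + b * s, s * t, mul_mem hs ht, ?_⟩
    rw [map_mul, map_add, map_mul, map_mul, ← ha, ← hb]
    ring
  | neg x _ ihx =>
    obtain ⟨a, s, hs, ha⟩ := ihx
    exact ⟨-a, s, hs, by rw [map_neg, ← ha, neg_mul]⟩
  | mul x y _ _ ihx ihy =>
    obtain ⟨a, s, hs, ha⟩ := ihx
    obtain ⟨b, t, ht, hb⟩ := ihy
    refine ⟨a * b, s * t, mul_mem hs ht, ?_⟩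
    rw [map_mul, map_mul, ← ha, ← hb]
    ring

end Atilde

lemma lEval_eq_zero_of_natCast_mul_aeval_eq_zero {f : LaurentPolynomial ℤ} {m : ℕ} {g : ℤ[X]}
    {h : RatFunc ℚ} (hh : h ∈ Atilde)
    (heq : lRF f = (m : RatFunc ℚ) * aeval RatFunc.X g * h)
    {K : Type*} [Field K] {z : Kˣ} (hz : ∀ n : ℕ, 0 < n → z ^ n ≠ 1)
    (hmg : (m : K) * aeval (z : K) g = 0) : lEval z f = 0 := by
  obtain ⟨N, P, hP⟩ := f.exists_T_pow
  obtain ⟨a, s, hs, ha⟩ := Atilde.exists_mul_eq_aeval_of_mem hh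
  have hpoly : P * s = Polynomial.C (m : ℤ) * g * a * X ^ N := by
    apply RatFunc.aeval_X_injective_int
    have hPX : lRF f * RatFunc.X ^ N = aeval RatFunc.X P := by
      rw [lRF_eq_lEval]
      -- the goals left are the agreement of the two `ℤ`-algebra structures on `ℚ(q)`
      convert lEval_mul_pow_eq_aeval (Units.mk0 (RatFunc.X : RatFunc ℚ) RatFunc.X_ne_zero) hP
        using 3 <;> first | rfl | exact Subsingleton.elim _ _
    rw [heq] at hPX
    simp only [map_mul, map_pow, aeval_X, map_natCast]
    linear_combination (-aeval RatFunc.X s) * hPX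
      + ((m : RatFunc ℚ) * aeval RatFunc.X g * RatFunc.X ^ N) * ha
  have hP0 : aeval (z : K) P = 0 := by
    have hPz := congrArg (aeval (z : K)) hpoly
    rw [map_mul, map_mul, map_mul, map_mul, aeval_C, map_natCast, hmg, zero_mul, zero_mul] at hPz
    exact (mul_eq_zero.mp hPz).resolve_right (Atilde.aeval_ne_zero_of_mem_denominators hz hs)
  have hfz := lEval_mul_pow_eq_aeval z hP
  rw [hP0] at hfz
  exact (mul_eq_zero.mp hfz).resolve_right (pow_ne_zero _ z.ne_zero)

lemma pow_ne_one_of_aeval_eq_zero {K : Type*} [Field K] [CharZero K] {g : ℤ[X]}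
    (hg : ∀ n : ℕ, 0 < n → ¬ cyclotomic n ℤ ∣ g) {μ : K} (hμ : aeval μ g = 0)
    {n : ℕ} (hn : 0 < n) : μ ^ n ≠ 1 := by
  intro hμn
  have hfin : IsOfFinOrder μ := isOfFinOrder_iff_pow_eq_one.mpr ⟨n, hn, hμn⟩
  have hμ' := IsPrimitiveRoot.orderOf μ
  refine hg _ hfin.orderOf_pos ?_
  rw [cyclotomic_eq_minpoly hμ' hfin.orderOf_pos]
  exact minpoly.isIntegrallyClosed_dvd (hμ'.isIntegral hfin.orderOf_pos) hμ

lemma exists_aeval_eq_zero_of_not_cyclotomic_dvd {g : ℤ[X]} (hg0 : g.eval 0 ≠ 0)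
    (hg : ∀ n : ℕ, 0 < n → ¬ cyclotomic n ℤ ∣ g) (hdeg : g.natDegree ≠ 0) :
    ∃ μ : ℂˣ, (∀ n : ℕ, 0 < n → μ ^ n ≠ 1) ∧ aeval (μ : ℂ) g = 0 := by
  obtain ⟨μ, hμ⟩ := IsAlgClosed.exists_aeval_eq_zero ℂ g
    fun h => hdeg (natDegree_eq_of_degree_eq_some h)
  have hμ0 : μ ≠ 0 := by
    rintro rfl
    rw [← coeff_zero_eq_aeval_zero', coeff_zero_eq_eval_zero, eq_intCast, Int.cast_eq_zero] at hμ
    exact hg0 hμ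
  refine ⟨Units.mk0 μ hμ0, fun n hn => ?_, hμ⟩
  rw [Ne, Units.ext_iff, Units.val_pow_eq_pow_val, Units.val_mk0, Units.val_one]
  exact pow_ne_one_of_aeval_eq_zero hg hμ hn

lemma Polynomial.IsPrimitive.eq_one_of_natDegree_eq_zero {g : ℤ[X]} (hprim : g.IsPrimitive)
    (hg0 : 0 < g.eval 0) (hdeg : g.natDegree = 0) : g = 1 := by
  obtain ⟨c, rfl⟩ := natDegree_eq_zero.mp hdeg
  rw [eval_C] at hg0
  rcases Int.isUnit_iff.mp (hprim c dvd_rfl) with rfl | rfl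
  · exact map_one Polynomial.C
  · exact absurd hg0 (by decide)

theorem stmt_2_general (f : LaurentPolynomial ℤ)
    (m : ℕ)
    (g : Polynomial ℤ) (hprim : g.IsPrimitive) (hg0 : 0 < g.eval 0)
    (hnocyc : ∀ n : ℕ, 0 < n → ¬ (Polynomial.cyclotomic n ℤ ∣ g))
    (h : RatFunc ℚ) (hh : h ∈ Atilde)
    (heq : lRF f = (m : RatFunc ℚ) * Polynomial.aeval (RatFunc.X : RatFunc ℚ) g * h)
    (hspec : ∀ (K : Type) (_ : Field K) (z : Kˣ),
      (∀ n : ℕ, 0 < n → z ^ n ≠ 1) → lEval z f ≠ 0) :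
    m = 1 ∧ g = 1 := by
  have hmg : ∀ (K : Type) [Field K] (z : Kˣ), (∀ n : ℕ, 0 < n → z ^ n ≠ 1) →
      (m : K) * aeval (z : K) g ≠ 0 := fun K _ z hz hmg =>
    hspec K _ z hz (lEval_eq_zero_of_natCast_mul_aeval_eq_zero hh heq hz hmg)
  constructor
  · by_contra hm1
    obtain ⟨p, hp, hpm⟩ := Nat.exists_prime_and_dvd hm1
    have := Fact.mk hp
    refine hmg (RatFunc (ZMod p)) _ (fun n hn => RatFunc.mk0_X_pow_ne_one hn) ?_
    rw [(CharP.cast_eq_zero_iff (RatFunc (ZMod p)) p m).mpr hpm, zero_mul]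
  · refine hprim.eq_one_of_natDegree_eq_zero hg0 ?_
    by_contra hdeg
    obtain ⟨μ, hμ, hgμ⟩ := exists_aeval_eq_zero_of_not_cyclotomic_dvd hg0.ne' hnocyc hdeg
    exact hmg ℂ μ hμ (by rw [hgμ, mul_zero])

/-- write a nonzero `f ∈ ℤ[q,q⁻¹]` as `f = m·g·h` with `m ∈ ℤ_{>0}`,
`g ∈ ℤ[q]` primitive with `g(0) > 0` and with no cyclotomic irreducible factor, and
`h` a unit of `Ã`.  If every specialization of `f` at a non-root-of-unity `z ∈ Kˣ`
is nonzero, then `m = 1` and `g = 1`. -/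
theorem stmt_2 (f : LaurentPolynomial ℤ) (hf : f ≠ 0)
    (m : ℕ) (hm : 0 < m)
    (g : Polynomial ℤ) (hprim : g.IsPrimitive) (hg0 : 0 < g.eval 0)
    (hnocyc : ∀ n : ℕ, 0 < n → ¬ (Polynomial.cyclotomic n ℤ ∣ g))
    (h : RatFunc ℚ) (hh : h ∈ Atilde) (hh' : h⁻¹ ∈ Atilde)
    (heq : lRF f = (m : RatFunc ℚ) * Polynomial.aeval (RatFunc.X : RatFunc ℚ) g * h)
    (hspec : ∀ (K : Type) (_ : Field K) (z : Kˣ),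
      (∀ n : ℕ, 0 < n → z ^ n ≠ 1) → lEval z f ≠ 0) :
    m = 1 ∧ g = 1 :=
  stmt_2_general f m g hprim hg0 hnocyc h hh heq hspec
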